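/- The free s-step nilpotent Lie algebra on k ≥ s generators has no nonzero multilinear element of degree s that vanishes identically on the Lie algebra 𝔲_s of strictly upper triangular (s+1)×(s+1) matrices. Equivalently, the canonical evaluation map from the space H_s of multilinear degree-s elements of the free Lie algebra on k generators (in the variables x_1,…,x_s) to the space of s-multilinear bracket maps 𝔲_s^s → 𝔲_s is injective. -/

import Mathlib

/-! Substitute `x_i ↦ e_{τ i} = E_{τ i, τ i + 1}` with `τ 0 = 0`. In a left-normed bracket
starting from `E_{0,1}`, bracketing `E_{0,j}` with `e_b` gives `E_{0,j+1}` if `b = j` and `0`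
otherwise, so `m_σ` evaluates to `E_{0,s}` when `τ σ = 1` and to `0` otherwise. These
substitutions are therefore dual to the basis `(m_σ)`: each one isolates a single coefficient of
an element of `H_s`, and if all of them vanish, so does every coefficient. -/

/-- A matrix is strictly upper triangular. -/
def IsStrictUpper {s : ℕ} (A : Matrix (Fin (s + 1)) (Fin (s + 1)) ℝ) : Prop :=
  ∀ i j : Fin (s + 1), (j : ℕ) ≤ (i : ℕ) → A i j = 0

/-- The multilinear bracket monomial `m_σ = [⋯[[x_1, x_{σ(2)}], x_{σ(3)}], …, x_{σ(s)}]` in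
the free Lie algebra on `k ≥ s` generators (indices `0`-based). -/
noncomputable def freeLieMonomial (k s : ℕ) (hsk : s ≤ k) (hs : 0 < s)
    (σ : Equiv.Perm (Fin s)) : FreeLieAlgebra ℝ (Fin k) :=
  ((List.finRange s).drop 1).foldl
    (fun acc j => ⁅acc, FreeLieAlgebra.of ℝ (Fin.castLE hsk (σ j))⁆)
    (FreeLieAlgebra.of ℝ (Fin.castLE hsk (σ ⟨0, hs⟩)))

/-- The space `H_s` of multilinear degree-`s` elements of the free Lie algebra on `k`
generators in the variables `x_1, …, x_s`: the span of the monomials `m_σ`, for `σ` a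
permutation of `{1,…,s}` fixing `1`. -/
noncomputable def multilinearComponent (k s : ℕ) (hsk : s ≤ k) (hs : 0 < s) :
    Submodule ℝ (FreeLieAlgebra ℝ (Fin k)) :=
  Submodule.span ℝ (Set.range
    (fun σ : {σ : Equiv.Perm (Fin s) // σ ⟨0, hs⟩ = ⟨0, hs⟩} =>
      freeLieMonomial k s hsk hs σ.1))

attribute [local instance 100] LieRing.ofAssociativeRing

open Matrix

theorem foldl_lie_zero {L ι : Type*} [LieRing L] (g : ι → L) (l : List ι) :
    l.foldl (fun A b => ⁅A, g b⁆) 0 = 0 := by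
  induction l with
  | nil => rfl
  | cons a l ih => rwa [List.foldl_cons, zero_lie]

theorem FreeLieAlgebra.lift_foldl_lie_of {R X L ι : Type*} [CommRing R] [LieRing L]
    [LieAlgebra R L] (f : X → L) (g : ι → X) (z : FreeLieAlgebra R X) (l : List ι) :
    FreeLieAlgebra.lift R f (l.foldl (fun A j => ⁅A, FreeLieAlgebra.of R (g j)⁆) z)
      = l.foldl (fun A j => ⁅A, f (g j)⁆) (FreeLieAlgebra.lift R f z) := by
  induction l generalizing z with
  | nil => rfl
  | cons a l ih => rw [List.foldl_cons, List.foldl_cons, ih, LieHom.map_lie, lift_of_apply]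

section Superdiagonal

variable (R : Type*) [Ring R]

def superdiagSingle (s : ℕ) (a : Fin s) : Matrix (Fin (s + 1)) (Fin (s + 1)) R :=
  single a.castSucc a.succ 1

variable {R}

theorem single_zero_lie_superdiagSingle {s : ℕ} (q : Fin (s + 1)) (b : Fin s) :
    ⁅single (0 : Fin (s + 1)) q (1 : R), superdiagSingle R s b⁆
      = if q = b.castSucc then single 0 b.succ 1 else 0 := by
  rw [Ring.lie_def, superdiagSingle, single_mul_single_of_ne _ _ _ _ b.succ_ne_zero, sub_zero]
  split_ifs with hq
  · rw [hq, single_mul_single_same, one_mul]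
  · exact single_mul_single_of_ne _ _ _ _ hq 1

theorem foldl_lie_superdiagSingle {s : ℕ} (f : Fin s → Fin s) (j : ℕ) (hj : j ≤ s) :
    ((List.finRange s).drop j).foldl (fun A t => ⁅A, superdiagSingle R s (f t)⁆)
        (single 0 ⟨j, Nat.lt_succ_of_le hj⟩ 1)
      = if ∀ t : Fin s, j ≤ t → f t = t then single 0 (Fin.last s) 1 else 0 := by
  induction hd : s - j generalizing j with
  | zero =>
    obtain rfl : j = s := by omega
    rw [if_pos fun t ht => absurd t.2 (by omega), List.drop_eq_nil_of_le (by simp),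
      List.foldl_nil]
    rfl
  | succ d ih =>
    have hjs : j < s := by omega
    rw [List.drop_eq_getElem_cons (by simpa using hjs), List.foldl_cons, List.getElem_finRange,
      single_zero_lie_superdiagSingle]
    by_cases hfj : f ⟨j, hjs⟩ = ⟨j, hjs⟩
    · have hcond : (∀ t : Fin s, j + 1 ≤ t → f t = t) ↔ ∀ t : Fin s, j ≤ t → f t = t :=
        ⟨fun h t ht => by
          rcases ht.eq_or_lt with htj | htj
          · rwa [show t = ⟨j, hjs⟩ from Fin.ext htj.symm]
          · exact h t htj,
        fun h t ht => h t (by omega)⟩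
      simp only [Fin.cast_mk, hfj, Fin.castSucc_mk, Fin.succ_mk, if_pos]
      rw [ih (j + 1) (by omega) (by omega)]
      exact if_congr hcond rfl rfl
    · have hne : (⟨j, by omega⟩ : Fin (s + 1)) ≠ (f ⟨j, hjs⟩).castSucc := fun h =>
        hfj (Fin.ext (congrArg Fin.val h).symm)
      rw [Fin.cast_mk, if_neg hne, foldl_lie_zero, if_neg fun h => hfj (h _ le_rfl)]

end Superdiagonal

def superdiagSubst (k s : ℕ) (ρ : Equiv.Perm (Fin s)) (i : Fin k) :
    Matrix (Fin (s + 1)) (Fin (s + 1)) ℝ :=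
  if h : (i : ℕ) < s then superdiagSingle ℝ s (ρ ⟨i, h⟩) else 0

theorem isStrictUpper_superdiagSubst (k s : ℕ) (ρ : Equiv.Perm (Fin s)) (i : Fin k) :
    IsStrictUpper (superdiagSubst k s ρ i) := by
  intro a b hba
  unfold superdiagSubst
  split_ifs
  · rw [superdiagSingle, single_apply_of_ne]
    rintro ⟨rfl, rfl⟩
    simp at hba
  · rfl

theorem superdiagSubst_castLE {k s : ℕ} (hsk : s ≤ k) (ρ : Equiv.Perm (Fin s)) (j : Fin s) :
    superdiagSubst k s ρ (Fin.castLE hsk j) = superdiagSingle ℝ s (ρ j) :=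
  dif_pos j.2

theorem lift_superdiagSubst_freeLieMonomial {k s : ℕ} (hsk : s ≤ k) (hs : 0 < s)
    (σ ρ : Equiv.Perm (Fin s)) (h0 : ρ (σ ⟨0, hs⟩) = ⟨0, hs⟩) :
    FreeLieAlgebra.lift ℝ (superdiagSubst k s ρ) (freeLieMonomial k s hsk hs σ)
      = if ρ * σ = 1 then single 0 (Fin.last s) 1 else 0 := by
  have hstart : superdiagSingle ℝ s (ρ (σ ⟨0, hs⟩)) = single 0 ⟨1, by omega⟩ 1 := by
    rw [h0]; rfl
  rw [freeLieMonomial, FreeLieAlgebra.lift_foldl_lie_of, FreeLieAlgebra.lift_of_apply]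
  simp only [superdiagSubst_castLE]
  rw [hstart, foldl_lie_superdiagSingle (fun t => ρ (σ t)) 1 hs]
  refine if_congr ⟨fun h => Equiv.ext fun t => ?_,
    fun h t _ => by simp [← Equiv.Perm.mul_apply, h]⟩ rfl rfl
  rcases Nat.eq_zero_or_pos t with ht | ht
  · rwa [show t = ⟨0, hs⟩ from Fin.ext ht]
  · exact h t ht

theorem lift_superdiagSubst_inv_sum_smul_freeLieMonomial {k s : ℕ} (hsk : s ≤ k) (hs : 0 < s)
    (c : {σ : Equiv.Perm (Fin s) // σ ⟨0, hs⟩ = ⟨0, hs⟩} → ℝ)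
    (τ : {σ : Equiv.Perm (Fin s) // σ ⟨0, hs⟩ = ⟨0, hs⟩}) :
    FreeLieAlgebra.lift ℝ (superdiagSubst k s τ.1⁻¹) (∑ σ, c σ • freeLieMonomial k s hsk hs σ.1)
      = c τ • single 0 (Fin.last s) 1 := by
  have hτ : τ.1⁻¹ ⟨0, hs⟩ = ⟨0, hs⟩ := Equiv.Perm.inv_eq_iff_eq.mpr τ.2.symm
  have heval (σ : {σ : Equiv.Perm (Fin s) // σ ⟨0, hs⟩ = ⟨0, hs⟩}) :
      FreeLieAlgebra.lift ℝ (superdiagSubst k s τ.1⁻¹) (freeLieMonomial k s hsk hs σ.1)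
        = if τ = σ then single 0 (Fin.last s) 1 else 0 := by
    rw [lift_superdiagSubst_freeLieMonomial hsk hs _ _ (by rw [σ.2, hτ])]
    exact if_congr (by rw [inv_mul_eq_one, Subtype.ext_iff]) rfl rfl
  simp [heval]

/-- The free Lie algebra on `k ≥ s` generators has no nonzero multilinear element of degree
`s` vanishing identically on the Lie algebra `𝔲_s` of strictly upper triangular
`(s+1)×(s+1)` real matrices: the evaluation map on `H_s` is injective. -/
theorem no_multilinear_law_of_strictly_upper_triangular
    (k s : ℕ) (hsk : s ≤ k) (hs : 0 < s)
    (r : FreeLieAlgebra ℝ (Fin k)) (hr : r ∈ multilinearComponent k s hsk hs)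
    (hvanish : ∀ X : Fin k → Matrix (Fin (s + 1)) (Fin (s + 1)) ℝ,
      (∀ i, IsStrictUpper (X i)) → (FreeLieAlgebra.lift ℝ X) r = 0) :
    r = 0 := by
  obtain ⟨c, rfl⟩ := (Submodule.mem_span_range_iff_exists_fun ℝ).mp hr
  have hc (τ) : c τ = 0 := by
    have h := hvanish _ (isStrictUpper_superdiagSubst k s τ.1⁻¹)
    rw [lift_superdiagSubst_inv_sum_smul_freeLieMonomial, smul_eq_zero] at h
    exact h.resolve_right fun h1 => by simpa using congrFun (congrFun h1 0) (Fin.last s)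
  simp [hc]
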